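/- arXiv:1510.06680 — 4 statements merged into one kernel-verified Lean document; each statement's English description precedes it below -/
import Mathlib

section
/- Let D=(Ω,B) be a supersimple 2-(n,4,λ) design with n > 2λ+2, let ∞ ∈ Ω and let G := L_∞(D) be its Conway groupoid. If G is closed under composition (equivalently, G is a subgroup of Sym(Ω)), then G acts primitively on Ω. -/
open Equiv

variable {Ω : Type*}

/-- `(Ω, B)` is a `2-(n,4,lam)` design: `Ω` has `n` points, every line has 4 points,
and every 2-element subset of `Ω` is contained in exactly `lam` lines. -/
def IsDesign [Fintype Ω] (B : Set (Finset Ω)) (n lam : ℕ) : Prop :=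
  Fintype.card Ω = n ∧
  (∀ L ∈ B, L.card = 4) ∧
  (∀ p : Finset Ω, p.card = 2 → {L ∈ B | p ⊆ L}.ncard = lam)

/-- A design is supersimple if any two distinct lines intersect in at most two points. -/
def Supersimple [DecidableEq Ω] (B : Set (Finset Ω)) : Prop :=
  ∀ L₁ ∈ B, ∀ L₂ ∈ B, L₁ ≠ L₂ → (L₁ ∩ L₂).card ≤ 2

/-- Condition (△): the symmetric difference of two lines meeting in two points is a line. -/
def SymmDiffCond [DecidableEq Ω] (B : Set (Finset Ω)) : Prop :=
  ∀ L₁ ∈ B, ∀ L₂ ∈ B, (L₁ ∩ L₂).card = 2 → symmDiff L₁ L₂ ∈ B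

/-- The collinear triples: 3-element subsets contained in some line. -/
def collinearTriples (B : Set (Finset Ω)) : Set (Finset Ω) :=
  { t | t.card = 3 ∧ ∃ L ∈ B, t ⊆ L }

/-- `(Ω, C)` is a regular two-graph: `C` is a set of 3-element subsets, every 2-element
subset lies in exactly `μ` members of `C` for a constant `μ`, and every 4-element subset
contains exactly 0, 2 or 4 members of `C`. -/
def IsRegularTwoGraph (C : Set (Finset Ω)) : Prop :=
  (∀ t ∈ C, t.card = 3) ∧
  (∃ μ : ℕ, ∀ p : Finset Ω, p.card = 2 → {t ∈ C | p ⊆ t}.ncard = μ) ∧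
  (∀ q : Finset Ω, q.card = 4 →
    {t ∈ C | t ⊆ q}.ncard = 0 ∨ {t ∈ C | t ⊆ q}.ncard = 2 ∨ {t ∈ C | t ⊆ q}.ncard = 4)

/-- `mv a b` is the elementary move `[a,b]`: it is the identity when `a = b`; when `a ≠ b`
it interchanges `a` and `b`, interchanges `x` and `y` whenever `{a,b,x,y}` is a line, and
fixes every point not collinear with `a, b`. -/
def IsElemMoveFn [DecidableEq Ω] (B : Set (Finset Ω)) (mv : Ω → Ω → Equiv.Perm Ω) : Prop :=
  (∀ a, mv a a = 1) ∧
  ∀ a b : Ω, a ≠ b →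
    mv a b a = b ∧ mv a b b = a ∧
    (∀ x y : Ω, ({a, b, x, y} : Finset Ω) ∈ B → mv a b x = y) ∧
    (∀ x : Ω, x ≠ a → x ≠ b → (∀ L ∈ B, ¬(a ∈ L ∧ b ∈ L ∧ x ∈ L)) → mv a b x = x)

/-- The move sequence `[a, b₁, …, b_k] = [a,b₁][b₁,b₂]⋯[b_{k-1},b_k]`; the factors are
applied left-to-right (so in Lean's convention the product is reversed). -/
def moveSeq (mv : Ω → Ω → Equiv.Perm Ω) : Ω → List Ω → Equiv.Perm Ω
  | _, [] => 1
  | a, b :: l => moveSeq mv b l * mv a b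

/-- The Conway groupoid `L_x(D)`: all move sequences starting at `x`. -/
def ConwayGroupoid (mv : Ω → Ω → Equiv.Perm Ω) (x : Ω) : Set (Equiv.Perm Ω) :=
  { g | ∃ l : List Ω, g = moveSeq mv x l }

/-- The hole stabilizer `π_x(D)`: all move sequences starting and ending at `x`. -/
def holeStabilizer (mv : Ω → Ω → Equiv.Perm Ω) (x : Ω) : Set (Equiv.Perm Ω) :=
  { g | ∃ l : List Ω, g = moveSeq mv x (l ++ [x]) }

/-- `L(D)`: the set of all move sequences. -/
def allMoveSeqs (mv : Ω → Ω → Equiv.Perm Ω) : Set (Equiv.Perm Ω) :=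
  { g | ∃ (a : Ω) (l : List Ω), g = moveSeq mv a l }

/-- The set `E` of elementary moves `[a,b]` with `a ≠ b`. -/
def elemMoves (mv : Ω → Ω → Equiv.Perm Ω) : Set (Equiv.Perm Ω) :=
  { g | ∃ a b : Ω, a ≠ b ∧ g = mv a b }

/-- `\overline{x,y}`: the set of points lying on a common line with `x` and `y`. -/
def lineJoin (B : Set (Finset Ω)) (x y : Ω) : Set Ω :=
  { z | ∃ L ∈ B, x ∈ L ∧ y ∈ L ∧ z ∈ L }

/-- A set `G` of permutations is transitive on `S`. -/
def SetTransitiveOn (G : Set (Equiv.Perm Ω)) (S : Set Ω) : Prop :=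
  ∀ x ∈ S, ∀ y ∈ S, ∃ g ∈ G, g x = y

/-- `Δ` is a block for the set `G` of permutations. -/
def SetIsBlock (G : Set (Equiv.Perm Ω)) (Δ : Set Ω) : Prop :=
  ∀ g ∈ G, (⇑g) '' Δ = Δ ∨ Disjoint ((⇑g) '' Δ) Δ

/-- A set `G` of permutations is primitive on `S`: it is transitive on `S` and every
block contained in `S` is trivial (equivalently, the only invariant partitions are the
partition into singletons and the one-part partition). -/
def SetPrimitiveOn (G : Set (Equiv.Perm Ω)) (S : Set Ω) : Prop :=
  SetTransitiveOn G S ∧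
  ∀ Δ : Set Ω, Δ ⊆ S → SetIsBlock G Δ → Δ.Subsingleton ∨ Δ = S

/-- Primitivity on all of `Ω`. -/
def SetPrimitive (G : Set (Equiv.Perm Ω)) : Prop :=
  SetPrimitiveOn G Set.univ

/-- `(G, E)` is a 3-transposition group: `G` is the group generated by `E`, `E` is a
union of `G`-conjugacy classes of involutions, and any product of two members of `E`
has order 1, 2 or 3. -/
def Is3TranspositionGroup (G E : Set (Equiv.Perm Ω)) : Prop :=
  ((Subgroup.closure E : Subgroup (Equiv.Perm Ω)) : Set (Equiv.Perm Ω)) = G ∧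
  (∀ e ∈ E, orderOf e = 2) ∧
  (∀ g ∈ G, ∀ e ∈ E, g * e * g⁻¹ ∈ E) ∧
  (∀ g ∈ E, ∀ h ∈ E, orderOf (g * h) = 1 ∨ orderOf (g * h) = 2 ∨ orderOf (g * h) = 3)

/-- Two designs are isomorphic: a bijection of the point sets carrying lines to lines. -/
def DesignIso {Ω₁ Ω₂ : Type*} (B₁ : Set (Finset Ω₁)) (B₂ : Set (Finset Ω₂)) : Prop :=
  ∃ e : Ω₁ ≃ Ω₂, ∀ L : Finset Ω₁, L ∈ B₁ ↔ L.map e.toEmbedding ∈ B₂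

/-- The lines of the Boolean quadruple system of order `2^m`: 4-subsets of `F_2^m`
summing to zero. -/
def booleanLines (m : ℕ) : Set (Finset (Fin m → ZMod 2)) :=
  { L | L.card = 4 ∧ ∑ v ∈ L, v = 0 }

/-- `V = F_2^{2m}`, with coordinates indexed by `Fin m ⊕ Fin m`. -/
abbrev Vsp (m : ℕ) := (Fin m ⊕ Fin m) → ZMod 2

/-- `θ(u) = u e uᵀ` where `e` is the block matrix `(0 I; 0 0)`. -/
def theta {m : ℕ} (u : Vsp m) : ZMod 2 :=
  ∑ i : Fin m, u (Sum.inl i) * u (Sum.inr i)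

/-- The lines of the design `D^a`: 4-subsets of `V` summing to zero on which `θ` sums
to zero. -/
def linesA (m : ℕ) : Set (Finset (Vsp m)) :=
  { L | L.card = 4 ∧ ∑ v ∈ L, v = 0 ∧ ∑ v ∈ L, theta v = 0 }

/-- The lines of the design `D^ε`: 4-subsets of `{v ∈ V : θ(v) = ε}` summing to zero. -/
def linesEps (m : ℕ) (ε : ZMod 2) : Set (Finset {v : Vsp m // theta v = ε}) :=
  { L | L.card = 4 ∧ ∑ v ∈ L, (v : Vsp m) = 0 }

/-- The derived graph `G_{D,∞}`: vertices are the points other than `∞`, with `a, b`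
adjacent iff `{∞,a,b}` is a collinear triple. -/
def derivedGraph [DecidableEq Ω] (B : Set (Finset Ω)) (inf : Ω) :
    SimpleGraph {x : Ω // x ≠ inf} where
  Adj a b := a ≠ b ∧ ({inf, (a : Ω), (b : Ω)} : Finset Ω) ∈ collinearTriples B
  symm := by
    constructor
    rintro a b ⟨hab, h⟩
    exact ⟨hab.symm, by rwa [Finset.pair_comm (b : Ω) (a : Ω)]⟩
  loopless := by constructor; rintro a ⟨h, -⟩; exact h rfl

/-- `w` witnesses the triangle property for the edge `{u,v}`: `w` is a common neighbour
of `u` and `v`, and every other vertex is adjacent to exactly one or three of `u,v,w`. -/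
def TriangleWitness {V : Type*} (G : SimpleGraph V) (u v w : V) : Prop :=
  G.Adj u w ∧ G.Adj v w ∧
  ∀ x : V, x ∉ ({u, v, w} : Set V) →
    ({y ∈ ({u, v, w} : Set V) | G.Adj x y}.ncard = 1 ∨
     {y ∈ ({u, v, w} : Set V) | G.Adj x y}.ncard = 3)

/-- The triangle property for a graph. -/
def HasTriangleProperty {V : Type*} (G : SimpleGraph V) : Prop :=
  (∃ u v, G.Adj u v) ∧ ∀ u v : V, G.Adj u v → ∃ w, TriangleWitness G u v w

/-- The strong triangle property: each edge has a unique triangle-property witness. -/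
def HasStrongTriangleProperty {V : Type*} (G : SimpleGraph V) : Prop :=
  (∃ u v, G.Adj u v) ∧ ∀ u v : V, G.Adj u v → ∃! w, TriangleWitness G u v w

/-- A coherent 4-subset: all four of its 3-element subsets lie in `C`. -/
def IsCoherent (C : Set (Finset Ω)) (q : Finset Ω) : Prop :=
  q.card = 4 ∧ ∀ t ⊆ q, t.card = 3 → t ∈ C

/-!
Closure under composition makes `L_∞(D)` a group, since `Sym(Ω)` is finite, and this group
contains every elementary move `[a,b] = [∞,a,b] [∞,a]⁻¹`; the moves alone make it
transitive. Each move `[a,b]` with `a ≠ b` moves exactly `2λ + 2` points: `a`, `b`, and the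
two further points of each of the `λ` lines through `a` and `b`, which are disjoint by
supersimplicity.

Let `Δ` be a block with `1 < |Δ| < n`. If `d ≠ e` lie in `Δ` and `z ∉ Δ`, then `[d,z]`
carries `Δ` off itself, so it moves `e`; thus `d, e, z` are collinear and `[d,e]` moves `z`,
giving `n - |Δ| ≤ 2λ`. On the other hand, for `a ∈ Δ` and `c ∉ Δ` the move `[a,c]` fixes
some point `d` because `2λ + 2 < n`, and then it fixes the whole block `Δ'` through `d`
pointwise: were `[a,c] u = w ≠ u` for some `u ∈ Δ'`, then `[a,u]` would map `Δ` onto `Δ'`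
and `c` to `w ∈ Δ'`, forcing `c ∈ Δ`. Hence `|Δ| + 2λ + 2 ≤ n`, a contradiction.
-/

open scoped Pointwise

lemma Subgroup.coe_closure_eq_of_mul_mem {G : Type*} [Group G] [Finite G] {s : Set G}
    (hone : 1 ∈ s) (hmul : ∀ a ∈ s, ∀ b ∈ s, a * b ∈ s) :
    (closure s : Set G) = s := by
  let S : Submonoid G := ⟨⟨s, fun {a b} ha hb => hmul a ha b hb⟩, hone⟩
  rw [← coe_toSubmonoid, closure_toSubmonoid_of_finite]
  exact congrArg SetLike.coe (Submonoid.closure_eq S)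

lemma MulAction.IsBlock.smul_ne_of_smul_notMem {G X : Type*} [Group G] [MulAction G X]
    {Δ : Set X} (hΔ : IsBlock G Δ) {g : G} {x y : X} (hx : x ∈ Δ) (hgx : g • x ∉ Δ)
    (hy : y ∈ Δ) : g • y ≠ y := by
  rcases hΔ.smul_eq_or_disjoint g with h | h
  · exact absurd (h ▸ Set.smul_mem_smul_set hx) hgx
  · exact fun hgy => Set.disjoint_left.mp h (Set.smul_mem_smul_set hy) (by rwa [hgy])

lemma setPrimitive_of_isPreprimitive (H : Subgroup (Perm Ω)) [MulAction.IsPreprimitive H Ω] :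
    SetPrimitive (H : Set (Perm Ω)) := by
  refine ⟨fun x _ y _ => ?_, fun Δ _ hΔ => ?_⟩
  · obtain ⟨g, rfl⟩ := MulAction.exists_smul_eq H x y
    exact ⟨g, g.2, rfl⟩
  · exact MulAction.IsPreprimitive.isTrivialBlock_of_isBlock (G := H)
      (MulAction.isBlock_iff_smul_eq_or_disjoint.mpr fun g => hΔ g g.2)

lemma Finset.exists_fourth_of_card_eq_four {α : Type*} [DecidableEq α] {L : Finset α}
    (hL : L.card = 4) {a b x : α} (ha : a ∈ L) (hb : b ∈ L) (hx : x ∈ L)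
    (hab : a ≠ b) (hxa : x ≠ a) (hxb : x ≠ b) :
    ∃ y, y ≠ x ∧ L = {a, b, x, y} := by
  have hsub : ({a, b, x} : Finset α) ⊆ L := by simp [Finset.insert_subset_iff, *]
  obtain ⟨y, hy, rfl⟩ :=
    Finset.exists_eq_insert_iff.mpr ⟨hsub, by simp [*, hxa.symm, hxb.symm]⟩
  simp only [Finset.mem_insert, Finset.mem_singleton, not_or] at hy
  exact ⟨y, hy.2.2, by ext; simp; tauto⟩

lemma Supersimple.eq_of_triple_subset [DecidableEq Ω] {B : Set (Finset Ω)}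
    (hss : Supersimple B) {L₁ L₂ : Finset Ω} (h₁ : L₁ ∈ B) (h₂ : L₂ ∈ B) {a b x : Ω}
    (hab : a ≠ b) (hxa : x ≠ a) (hxb : x ≠ b) (hL₁ : {a, b, x} ⊆ L₁) (hL₂ : {a, b, x} ⊆ L₂) :
    L₁ = L₂ := by
  by_contra hne
  have h3 : ({a, b, x} : Finset Ω).card = 3 := by simp [*, hxa.symm, hxb.symm]
  have := Finset.card_le_card (Finset.subset_inter hL₁ hL₂)
  have := hss L₁ h₁ L₂ h₂ hne
  omega

namespace IsElemMoveFn

variable [DecidableEq Ω] {B : Set (Finset Ω)} {mv : Ω → Ω → Perm Ω}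

lemma apply_left (hmv : IsElemMoveFn B mv) (a b : Ω) : mv a b a = b := by
  rcases eq_or_ne a b with rfl | hab
  · rw [hmv.1]; rfl
  · exact (hmv.2 a b hab).1

variable [Fintype Ω]

lemma mem_support_iff (hmv : IsElemMoveFn B mv) (hB4 : ∀ L ∈ B, L.card = 4) {a b x : Ω}
    (hab : a ≠ b) : x ∈ (mv a b).support ↔ x = a ∨ x = b ∨ x ∈ lineJoin B a b := by
  obtain ⟨hmva, hmvb, hmv_line, hmv_fix⟩ := hmv.2 a b hab
  rw [Perm.mem_support]
  constructor
  · intro hx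
    by_contra! h
    exact hx (hmv_fix x h.1 h.2.1 fun L hL ⟨haL, hbL, hxL⟩ => h.2.2 ⟨L, hL, haL, hbL, hxL⟩)
  · intro h
    rcases eq_or_ne x a with rfl | hxa
    · rw [hmva]; exact hab.symm
    rcases eq_or_ne x b with rfl | hxb
    · rw [hmvb]; exact hab
    obtain ⟨L, hL, haL, hbL, hxL⟩ := (h.resolve_left hxa).resolve_left hxb
    obtain ⟨y, hyx, rfl⟩ :=
      Finset.exists_fourth_of_card_eq_four (hB4 _ hL) haL hbL hxL hab hxa hxb
    rw [hmv_line x y hL]; exact hyx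

lemma apply_swap_of_apply_ne (hmv : IsElemMoveFn B mv) (hB4 : ∀ L ∈ B, L.card = 4)
    {a c u : Ω} (hu : mv a c u ≠ u) : mv a u c = mv a c u := by
  have hac : a ≠ c := by rintro rfl; exact hu (by rw [hmv.1]; rfl)
  rcases eq_or_ne u a with rfl | hua
  · rw [hmv.1, hmv.apply_left]; rfl
  rcases eq_or_ne u c with rfl | huc
  · rfl
  obtain ⟨L, hL, haL, hcL, huL⟩ :=
    (((hmv.mem_support_iff hB4 hac).mp (Perm.mem_support.mpr hu)).resolve_left
      hua).resolve_left huc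
  obtain ⟨w, -, rfl⟩ := Finset.exists_fourth_of_card_eq_four (hB4 _ hL) haL hcL huL hac hua huc
  rw [(hmv.2 a c hac).2.2.1 u w hL, (hmv.2 a u hua.symm).2.2.1 c w]
  rwa [Finset.insert_comm u c]

lemma card_support (hmv : IsElemMoveFn B mv) {n lam : ℕ} (hD : IsDesign B n lam)
    (hss : Supersimple B) {a b : Ω} (hab : a ≠ b) :
    (mv a b).support.card = 2 * lam + 2 := by
  classical
  set S : Finset (Finset Ω) := {L | L ∈ B ∧ {a, b} ⊆ L}
  have hS : S.card = lam := by
    rw [← hD.2.2 {a, b} (Finset.card_pair hab), ← Set.ncard_coe_finset]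
    congr 1; ext L; simp [S]
  have hsupp : (mv a b).support = {a, b} ∪ S.biUnion (· \ {a, b}) := by
    ext x
    simp only [hmv.mem_support_iff hD.2.1 hab, lineJoin, S, Finset.mem_union,
      Finset.mem_biUnion, Finset.mem_filter, Finset.mem_univ, true_and, Finset.mem_sdiff,
      Finset.insert_subset_iff, Finset.singleton_subset_iff, Finset.mem_insert,
      Finset.mem_singleton, Set.mem_ofPred_eq, ← or_assoc]
    by_cases hx : x = a ∨ x = b
    · simp only [hx, true_or]
    · simp only [hx, false_or, not_false_eq_true, and_true]
      exact ⟨fun ⟨L, hL, haL, hbL, hxL⟩ => ⟨L, ⟨hL, haL, hbL⟩, hxL⟩,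
        fun ⟨L, ⟨hL, haL, hbL⟩, hxL⟩ => ⟨L, hL, haL, hbL, hxL⟩⟩
  have hdisj : (S : Set (Finset Ω)).PairwiseDisjoint (· \ {a, b}) := by
    intro L₁ hL₁ L₂ hL₂ hne
    simp only [S, Finset.coe_filter, Finset.mem_univ, true_and, Set.mem_ofPred_eq,
      Finset.insert_subset_iff, Finset.singleton_subset_iff] at hL₁ hL₂
    refine Finset.disjoint_left.mpr fun x hx₁ hx₂ => hne ?_
    simp only [Finset.mem_sdiff, Finset.mem_insert, Finset.mem_singleton, not_or] at hx₁ hx₂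
    exact hss.eq_of_triple_subset hL₁.1 hL₂.1 hab hx₁.2.1 hx₁.2.2
      (by simp [Finset.insert_subset_iff, *]) (by simp [Finset.insert_subset_iff, *])
  have hpair : ∀ L ∈ S, (L \ {a, b}).card = 2 := by
    intro L hL
    simp only [S, Finset.mem_filter, Finset.mem_univ, true_and] at hL
    rw [Finset.card_sdiff_of_subset hL.2, hD.2.1 L hL.1, Finset.card_pair hab]
  rw [hsupp, Finset.card_union_of_disjoint, Finset.card_biUnion hdisj, Finset.sum_const_nat hpair,
    hS, Finset.card_pair hab]
  · ring
  · exact Finset.disjoint_left.mpr fun x hx hx' => by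
      obtain ⟨L, -, hxL⟩ := Finset.mem_biUnion.mp hx'
      exact (Finset.mem_sdiff.mp hxL).2 hx

variable {n lam : ℕ} {H : Subgroup (Perm Ω)}

open MulAction

lemma ncard_compl_block_le (hmv : IsElemMoveFn B mv) (hD : IsDesign B n lam)
    (hss : Supersimple B) (hH : ∀ a b, mv a b ∈ H) {Δ : Set Ω} (hΔ : IsBlock H Δ) {d e : Ω}
    (hd : d ∈ Δ) (he : e ∈ Δ) (hde : d ≠ e) :
    Δᶜ.ncard ≤ 2 * lam := by
  have hsub : insert d (insert e Δᶜ) ⊆ ((mv d e).support : Set Ω) := by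
    rintro z (rfl | rfl | hz)
    · simp [hmv.mem_support_iff hD.2.1 hde]
    · simp [hmv.mem_support_iff hD.2.1 hde]
    have hzd : z ≠ d := fun h => hz (h ▸ hd)
    have hze : z ≠ e := fun h => hz (h ▸ he)
    have hmoved : mv d z e ≠ e :=
      hΔ.smul_ne_of_smul_notMem (g := ⟨mv d z, hH d z⟩) hd
        (show mv d z d ∉ Δ by rwa [hmv.apply_left]) he
    obtain h | h | ⟨L, hL, hdL, hzL, heL⟩ :=
      (hmv.mem_support_iff hD.2.1 hzd.symm).mp (Perm.mem_support.mpr hmoved)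
    · exact absurd h.symm hde
    · exact absurd h.symm hze
    · exact (hmv.mem_support_iff hD.2.1 hde).mpr (Or.inr (Or.inr ⟨L, hL, hdL, heL, hzL⟩))
  have := Set.ncard_le_ncard hsub
  rw [Set.ncard_insert_of_notMem, Set.ncard_insert_of_notMem, Set.ncard_coe_finset,
    hmv.card_support hD hss hde] at this
  · omega
  · simpa using he
  · simp [hde, hd]

lemma ncard_block_add_le (hmv : IsElemMoveFn B mv) (hD : IsDesign B n lam)
    (hss : Supersimple B) (hn : 2 * lam + 2 < n) (hH : ∀ a b, mv a b ∈ H) {Δ : Set Ω}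
    (hΔ : IsBlock H Δ) {a c : Ω} (ha : a ∈ Δ) (hc : c ∉ Δ) :
    Δ.ncard + (2 * lam + 2) ≤ n := by
  have hac : a ≠ c := fun h => hc (h ▸ ha)
  obtain ⟨d, -, hd⟩ : ∃ d ∈ Finset.univ, d ∉ (mv a c).support :=
    Finset.exists_mem_notMem_of_card_lt_card
      (by rw [hmv.card_support hD hss hac, Finset.card_univ, hD.1]; exact hn)
  rw [Perm.notMem_support] at hd
  have hsame := isBlock_iff_smul_eq_smul_of_nonempty.mp hΔ
  set g : H := ⟨mv a d, hH a d⟩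
  have hga : g • a = d := hmv.apply_left a d
  have hfix : ∀ u ∈ g • Δ, mv a c u = u := by
    intro u hu
    by_contra hw
    have hstab : ((⟨mv a c, hH a c⟩ : H) * g) • Δ = g • Δ :=
      hsame ⟨d, ⟨a, ha, show mv a c (mv a d a) = d by rw [hmv.apply_left]; exact hd⟩,
        ⟨a, ha, hga⟩⟩
    have hwΔ : mv a c u ∈ g • Δ := by
      rw [← hstab, mul_smul]; exact Set.smul_mem_smul_set hu
    have hk : (⟨mv a u, hH a u⟩ : H) • Δ = g • Δ :=
      hsame ⟨u, ⟨a, ha, hmv.apply_left a u⟩, hu⟩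
    rw [← hk, ← hmv.apply_swap_of_apply_ne hD.2.1 hw] at hwΔ
    exact hc (Set.smul_mem_smul_set_iff.mp hwΔ)
  have hdisj : Disjoint (g • Δ) ((mv a c).support : Set Ω) :=
    Set.disjoint_left.mpr fun u hu hu' => Perm.mem_support.mp hu' (hfix u hu)
  calc Δ.ncard + (2 * lam + 2) = (g • Δ).ncard + ((mv a c).support : Set Ω).ncard := by
        rw [Set.ncard_smul_set, Set.ncard_coe_finset, hmv.card_support hD hss hac]
    _ = (g • Δ ∪ (mv a c).support).ncard := (Set.ncard_union_eq hdisj).symm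
    _ ≤ n := by
        rw [← hD.1, ← Nat.card_eq_fintype_card]; exact Set.ncard_le_card _

theorem isPreprimitive_of_forall_mem (hmv : IsElemMoveFn B mv) (hD : IsDesign B n lam)
    (hss : Supersimple B) (hn : 2 * lam + 2 < n) (hH : ∀ a b, mv a b ∈ H) :
    IsPreprimitive H Ω := by
  have : IsPretransitive H Ω := ⟨fun x y => ⟨⟨mv x y, hH x y⟩, hmv.apply_left x y⟩⟩
  refine { isTrivialBlock_of_isBlock := fun {Δ} hΔ => ?_ }
  by_contra hnt
  obtain ⟨hns, hne⟩ := not_or.mp hnt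
  obtain ⟨d, hd, e, he, hde⟩ := Set.not_subsingleton_iff.mp hns
  obtain ⟨c, hc⟩ := (Set.ne_univ_iff_exists_notMem Δ).mp hne
  have hcompl := hmv.ncard_compl_block_le hD hss hH hΔ hd he hde
  have hblock := hmv.ncard_block_add_le hD hss hn hH hΔ hd hc
  have hcard := Set.ncard_add_ncard_compl Δ
  rw [Nat.card_eq_fintype_card, hD.1] at hcard
  omega

end IsElemMoveFn

/-- Theorem A(a): if the Conway groupoid `L_∞(D)` of a supersimple
`2-(n,4,λ)` design with `n > 2λ+2` is closed under composition, then it is a primitive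
subgroup of `Sym(Ω)`. -/
theorem conwayGroupoid_primitive_of_closed [Fintype Ω] [DecidableEq Ω]
    {B : Set (Finset Ω)} {n lam : ℕ}
    (hD : IsDesign B n lam) (hss : Supersimple B) (hn : 2 * lam + 2 < n)
    (mv : Ω → Ω → Equiv.Perm Ω) (hmv : IsElemMoveFn B mv) (inf : Ω)
    (hclosed : ∀ g ∈ ConwayGroupoid mv inf, ∀ h ∈ ConwayGroupoid mv inf,
      g * h ∈ ConwayGroupoid mv inf) :
    SetPrimitive (ConwayGroupoid mv inf) := by
  set H := Subgroup.closure (ConwayGroupoid mv inf)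
  have hH : (H : Set (Perm Ω)) = ConwayGroupoid mv inf :=
    Subgroup.coe_closure_eq_of_mul_mem ⟨[], rfl⟩ hclosed
  have hmvH : ∀ a b, mv a b ∈ H := fun a b => by
    have hab : mv a b * mv inf a ∈ H := Subgroup.subset_closure ⟨[a, b], rfl⟩
    have ha : mv inf a ∈ H := Subgroup.subset_closure ⟨[a], (one_mul _).symm⟩
    simpa using mul_mem hab (inv_mem ha)
  have := hmv.isPreprimitive_of_forall_mem hD hss hn hmvH
  rw [← hH]
  exact setPrimitive_of_isPreprimitive H
end

section
/- Let D=(Ω,B) be a supersimple 2-(n,4,λ) design with n > 2λ+2, let C be the set of collinear triples of D, and let ∞ ∈ Ω. If (Ω,C) is a regular two-graph, then the hole-stabilizer π_∞(D) (a subgroup of Sym(Ω) fixing ∞) acts transitively on Ω∖{∞}. -/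
open Equiv

variable {Ω : Type*}

/-!
For `x, y ≠ ∞`, the move sequence `[∞, x, y, ∞]` sends `x` to `y` whenever `{∞, x, y}` is not
collinear, because `[x, y]` then fixes `∞`. If `{∞, x, y}` is collinear, it suffices to find a
point `c ≠ ∞` collinear with neither `∞, x` nor `∞, y`, and to go from `x` to `y` through `c`.
Such a `c` exists by counting in the two-graph: otherwise the parity of the triples in
`{∞, x, y, z}` shows that the points collinear with both `∞, x` and `∞, y` are exactly the
points `≠ ∞` collinear with `x, y`, which forces `n - 1 ≤ μ + 1` for the number `μ` of collinear
triples through a pair; but `μ ≤ 2λ`, since each of the `λ` lines through a pair contributes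
two further points.
-/

theorem moveSeq_append_cons (mv : Ω → Ω → Perm Ω) (a b : Ω) (l₁ l₂ : List Ω) :
    moveSeq mv a (l₁ ++ b :: l₂) = moveSeq mv b l₂ * moveSeq mv a (l₁ ++ [b]) := by
  induction l₁ generalizing a with
  | nil => simp [moveSeq]
  | cons c l₁ ih => simp only [List.cons_append, moveSeq, ih, mul_assoc]

theorem mul_mem_holeStabilizer {mv : Ω → Ω → Perm Ω} {o : Ω} {g h : Perm Ω}
    (hg : g ∈ holeStabilizer mv o) (hh : h ∈ holeStabilizer mv o) :
    g * h ∈ holeStabilizer mv o := by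
  obtain ⟨l₁, rfl⟩ := hg
  obtain ⟨l₂, rfl⟩ := hh
  refine ⟨l₂ ++ o :: l₁, ?_⟩
  rw [List.append_assoc, List.cons_append, moveSeq_append_cons mv o o l₂ (l₁ ++ [o])]

section Collinearity

variable [DecidableEq Ω]

theorem ne_of_card_triple_eq_three {a b c : Ω} (h : ({a, b, c} : Finset Ω).card = 3) :
    a ≠ b ∧ a ≠ c ∧ b ≠ c := by
  refine ⟨?_, ?_, ?_⟩ <;> rintro rfl <;> simp at h <;> grind [Finset.card_le_two]

def pairLink (C : Set (Finset Ω)) (u v : Ω) : Set Ω :=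
  {x | ({u, v, x} : Finset Ω) ∈ C}

variable {C : Set (Finset Ω)}

theorem ncard_pairLink {μ : ℕ} (hC3 : ∀ t ∈ C, t.card = 3)
    (hμ : ∀ p : Finset Ω, p.card = 2 → {t ∈ C | p ⊆ t}.ncard = μ) {u v : Ω} (huv : u ≠ v) :
    (pairLink C u v).ncard = μ := by
  have himage : (fun x ↦ ({u, v, x} : Finset Ω)) '' pairLink C u v = {t ∈ C | {u, v} ⊆ t} := by
    ext t
    constructor
    · rintro ⟨x, hx, rfl⟩
      exact ⟨hx, by intro z; simp; tauto⟩
    · rintro ⟨htC, huvt⟩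
      obtain ⟨x, -, rfl⟩ := Finset.exists_eq_insert_iff.mpr
        ⟨huvt, by rw [Finset.card_pair huv, hC3 t htC]⟩
      have hperm : ({u, v, x} : Finset Ω) = insert x {u, v} := by ext; simp; tauto
      exact ⟨x, show _ ∈ C by rwa [hperm], hperm⟩
  rw [← hμ _ (Finset.card_pair huv), ← himage, Set.InjOn.ncard_image]
  intro x hx y hy hxy
  have hy3 := ne_of_card_triple_eq_three (hC3 _ hy)
  have : y ∈ ({u, v, x} : Finset Ω) := by simp only at hxy; simp [hxy]
  simp only [Finset.mem_insert, Finset.mem_singleton] at this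
  grind

theorem ncard_sep_subset_eq_card_filter_erase [DecidablePred (· ∈ C)] {k : ℕ}
    (hC : ∀ t ∈ C, t.card = k) {q : Finset Ω} (hq : q.card = k + 1) :
    {t ∈ C | t ⊆ q}.ncard = (q.filter (q.erase · ∈ C)).card := by
  have himage : q.erase '' ↑(q.filter (q.erase · ∈ C)) = {t ∈ C | t ⊆ q} := by
    ext t
    constructor
    · rintro ⟨i, hi, rfl⟩
      exact ⟨(Finset.mem_filter.mp hi).2, Finset.erase_subset i q⟩
    · rintro ⟨htC, htq⟩
      obtain ⟨i, hit, rfl⟩ := Finset.exists_eq_insert_iff.mpr ⟨htq, by rw [hC t htC, hq]⟩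
      exact ⟨i, by simpa [Finset.erase_insert hit] using htC, Finset.erase_insert hit⟩
  rw [← himage, Set.InjOn.ncard_image, Set.ncard_coe_finset]
  exact (Finset.erase_injOn q).mono (by simp +contextual [Set.subset_def])

-- The nested equivalence says that an even number of the four triples lie in `C`.
theorem IsRegularTwoGraph.mem_iff_mem_iff_mem_iff_mem (hC : IsRegularTwoGraph C)
    {p₁ p₂ p₃ p₄ : Ω} (h₁₂ : p₁ ≠ p₂) (h₁₃ : p₁ ≠ p₃) (h₁₄ : p₁ ≠ p₄) (h₂₃ : p₂ ≠ p₃)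
    (h₂₄ : p₂ ≠ p₄) (h₃₄ : p₃ ≠ p₄) :
    (({p₁, p₂, p₃} : Finset Ω) ∈ C ↔ ({p₁, p₂, p₄} : Finset Ω) ∈ C) ↔
      (({p₁, p₃, p₄} : Finset Ω) ∈ C ↔ ({p₂, p₃, p₄} : Finset Ω) ∈ C) := by
  classical
  obtain ⟨hC3, -, hC4⟩ := hC
  have hq : ({p₁, p₂, p₃, p₄} : Finset Ω).card = 3 + 1 := by simp [*]
  have hcount := ncard_sep_subset_eq_card_filter_erase hC3 hq
  rw [Finset.card_filter, Finset.sum_insert (by simp [*]), Finset.sum_insert (by simp [*]),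
    Finset.sum_insert (by simp [*]), Finset.sum_singleton] at hcount
  have e₁ : ({p₁, p₂, p₃, p₄} : Finset Ω).erase p₁ = {p₂, p₃, p₄} := by ext; simp; grind
  have e₂ : ({p₁, p₂, p₃, p₄} : Finset Ω).erase p₂ = {p₁, p₃, p₄} := by ext; simp; grind
  have e₃ : ({p₁, p₂, p₃, p₄} : Finset Ω).erase p₃ = {p₁, p₂, p₄} := by ext; simp; grind
  have e₄ : ({p₁, p₂, p₃, p₄} : Finset Ω).erase p₄ = {p₁, p₂, p₃} := by ext; simp; grind
  rw [e₁, e₂, e₃, e₄] at hcount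
  have heven := hC4 _ hq
  rw [hcount] at heven
  split_ifs at heven <;> tauto

theorem IsRegularTwoGraph.pairLink_eq_insert_inter (hC : IsRegularTwoGraph C) {o a b : Ω}
    (habC : ({o, a, b} : Finset Ω) ∈ C) (hcover : {o}ᶜ ⊆ pairLink C o a ∪ pairLink C o b) :
    pairLink C a b = insert o (pairLink C o a ∩ pairLink C o b) := by
  have hdeg : ∀ {x y z : Ω}, ({x, y, z} : Finset Ω) ∈ C → x ≠ y ∧ x ≠ z ∧ y ≠ z :=
    fun h ↦ ne_of_card_triple_eq_three (hC.1 _ h)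
  obtain ⟨hoa, hob, hab⟩ := hdeg habC
  ext x
  rcases eq_or_ne x o with rfl | hxo
  · refine iff_of_true (show ({a, b, x} : Finset Ω) ∈ C from ?_) (Set.mem_insert _ _)
    convert habC using 1
    ext; simp; tauto
  rw [Set.mem_insert_iff, or_iff_right hxo]
  rcases eq_or_ne x a with rfl | hxa
  · exact iff_of_false (fun h ↦ (hdeg h).2.1 rfl) (fun h ↦ (hdeg h.1).2.2 rfl)
  rcases eq_or_ne x b with rfl | hxb
  · exact iff_of_false (fun h ↦ (hdeg h).2.2 rfl) (fun h ↦ (hdeg h.2).2.2 rfl)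
  have hparity := hC.mem_iff_mem_iff_mem_iff_mem hoa hob hxo.symm hab hxa.symm hxb.symm
  have hx := hcover hxo
  simp only [pairLink, Set.mem_union, Set.mem_inter_iff] at hx ⊢
  tauto

theorem IsRegularTwoGraph.exists_ne_notMem_notMem [Finite Ω] (hC : IsRegularTwoGraph C)
    {o a b : Ω} (habC : ({o, a, b} : Finset Ω) ∈ C)
    (hcard : (pairLink C o a).ncard + 2 < Nat.card Ω) :
    ∃ c ≠ o, ({o, a, c} : Finset Ω) ∉ C ∧ ({o, c, b} : Finset Ω) ∉ C := by
  obtain ⟨μ, hμ⟩ := hC.2.1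
  obtain ⟨hoa, hob, hab⟩ := ne_of_card_triple_eq_three (hC.1 _ habC)
  by_contra! hcover
  have hcompl : {o}ᶜ ⊆ pairLink C o a ∪ pairLink C o b := by
    intro x hx
    by_cases hxA : x ∈ pairLink C o a
    · exact Or.inl hxA
    · refine Or.inr (show ({o, b, x} : Finset Ω) ∈ C from ?_)
      rw [Finset.pair_comm]
      exact hcover x hx hxA
  have hA : (pairLink C o a).ncard = μ := ncard_pairLink hC.1 hμ hoa
  have hB : (pairLink C o b).ncard = μ := ncard_pairLink hC.1 hμ hob
  have hAB : (pairLink C o a ∩ pairLink C o b).ncard + 1 = μ := by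
    rw [← ncard_pairLink hC.1 hμ hab, hC.pairLink_eq_insert_inter habC hcompl,
      Set.ncard_insert_of_notMem fun h ↦ (ne_of_card_triple_eq_three (hC.1 _ h.1)).2.1 rfl]
  have hunion := Set.ncard_union_add_ncard_inter (pairLink C o a) (pairLink C o b)
  have hcompl_le := Set.ncard_le_ncard hcompl
  have hsplit := Set.ncard_add_ncard_compl {o}
  rw [Set.ncard_singleton] at hsplit
  omega

theorem IsDesign.ncard_pairLink_collinearTriples_le [Fintype Ω] {B : Set (Finset Ω)}
    {n lam : ℕ} (hD : IsDesign B n lam) {u v : Ω} (huv : u ≠ v) :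
    (pairLink (collinearTriples B) u v).ncard ≤ 2 * lam := by
  obtain ⟨-, hline, hlam⟩ := hD
  have hfin : {L ∈ B | {u, v} ⊆ L}.Finite := Set.toFinite _
  have hsub : pairLink (collinearTriples B) u v ⊆ ↑(hfin.toFinset.biUnion (· \ {u, v})) := by
    rintro x ⟨h3, L, hL, htL⟩
    obtain ⟨-, hux, hvx⟩ := ne_of_card_triple_eq_three h3
    have hpair : {u, v} ⊆ L := fun z hz ↦ htL (by simp at hz ⊢; tauto)
    simp only [Finset.mem_coe, Finset.mem_biUnion, Set.Finite.mem_toFinset, Finset.mem_sdiff]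
    exact ⟨L, ⟨hL, hpair⟩, htL (by simp), by simp [hux.symm, hvx.symm]⟩
  calc (pairLink (collinearTriples B) u v).ncard
      ≤ (hfin.toFinset.biUnion (· \ {u, v})).card :=
        (Set.ncard_le_ncard hsub).trans_eq (Set.ncard_coe_finset _)
    _ ≤ hfin.toFinset.card * 2 := Finset.card_biUnion_le_card_mul _ _ _ fun L hL ↦ by
        rw [Set.Finite.mem_toFinset] at hL
        rw [Finset.card_sdiff_of_subset hL.2, hline L hL.1, Finset.card_pair huv]
    _ = 2 * lam := by
        rw [← Set.ncard_eq_toFinset_card _ hfin, hlam _ (Finset.card_pair huv), mul_comm]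

end Collinearity

section Moves

variable [DecidableEq Ω] {B : Set (Finset Ω)} {mv : Ω → Ω → Perm Ω}

theorem IsElemMoveFn.apply_eq_self (hmv : IsElemMoveFn B mv) {u v x : Ω} (huv : u ≠ v)
    (hxu : x ≠ u) (hxv : x ≠ v) (hx : ({x, u, v} : Finset Ω) ∉ collinearTriples B) :
    mv u v x = x :=
  (hmv.2 u v huv).2.2.2 x hxu hxv fun L hL ⟨hu, hv, hxL⟩ ↦ hx
    ⟨Finset.card_eq_three.mpr ⟨x, u, v, hxu, hxv, huv, rfl⟩, L, hL, by
      intro z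
      simp only [Finset.mem_insert, Finset.mem_singleton]
      rintro (rfl | rfl | rfl) <;> assumption⟩

theorem IsElemMoveFn.moveSeq_apply (hmv : IsElemMoveFn B mv) {o x y : Ω} (hx : x ≠ o)
    (hy : y ≠ o) (hxy : ({o, x, y} : Finset Ω) ∉ collinearTriples B) :
    moveSeq mv o ([x, y] ++ [o]) x = y := by
  have hfix : mv x y o = o := by
    rcases eq_or_ne x y with rfl | hne
    · rw [hmv.1, Perm.one_apply]
    · exact hmv.apply_eq_self hne hx.symm hy.symm hxy
  simp only [List.cons_append, List.nil_append, moveSeq, one_mul, Perm.mul_apply]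
  rw [(hmv.2 o x hx.symm).2.1, hfix, (hmv.2 y o hy).2.1]

end Moves

theorem holeStabilizer_transitive_general [Fintype Ω] [DecidableEq Ω]
    {B : Set (Finset Ω)} {n lam : ℕ}
    (hD : IsDesign B n lam) (hn : 2 * lam + 2 < n)
    (mv : Ω → Ω → Equiv.Perm Ω) (hmv : IsElemMoveFn B mv) (inf : Ω)
    (hRT : IsRegularTwoGraph (collinearTriples B)) :
    SetTransitiveOn (holeStabilizer mv inf) {x : Ω | x ≠ inf} := by
  intro x hx y hy
  by_cases hxy : ({inf, x, y} : Finset Ω) ∈ collinearTriples B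
  · have hcard : (pairLink (collinearTriples B) inf x).ncard + 2 < Nat.card Ω := by
      have := hD.ncard_pairLink_collinearTriples_le (Ne.symm hx)
      rw [Nat.card_eq_fintype_card, hD.1]
      omega
    obtain ⟨c, hc, hxc, hcy⟩ := hRT.exists_ne_notMem_notMem hxy hcard
    refine ⟨_, mul_mem_holeStabilizer ⟨[c, y], rfl⟩ ⟨[x, c], rfl⟩, ?_⟩
    rw [Perm.mul_apply, hmv.moveSeq_apply hx hc hxc, hmv.moveSeq_apply hc hy hcy]
  · exact ⟨_, ⟨[x, y], rfl⟩, hmv.moveSeq_apply hx hy hxy⟩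

/-- Theorem A(b): if the collinear triples of a supersimple
`2-(n,4,λ)` design with `n > 2λ+2` form a regular two-graph, then the hole stabilizer
`π_∞(D)` is transitive on `Ω \ {∞}`. -/
theorem holeStabilizer_transitive [Fintype Ω] [DecidableEq Ω]
    {B : Set (Finset Ω)} {n lam : ℕ}
    (hD : IsDesign B n lam) (hss : Supersimple B) (hn : 2 * lam + 2 < n)
    (mv : Ω → Ω → Equiv.Perm Ω) (hmv : IsElemMoveFn B mv) (inf : Ω)
    (hRT : IsRegularTwoGraph (collinearTriples B)) :
    SetTransitiveOn (holeStabilizer mv inf) {x : Ω | x ≠ inf} :=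
  holeStabilizer_transitive_general hD hn mv hmv inf hRT
end

section
/- Let D=(Ω,B) be a supersimple 2-(n,4,λ) design. Writing x^g for the image of a point x under a permutation g, the following are equivalent: (i) for all a,b,c,d ∈ Ω, [c,d]⁻¹[a,b][c,d] = [a^{[c,d]}, b^{[c,d]}]; (ii) for all a,b,c ∈ Ω, [b,c]⁻¹[a,b][b,c] = [a^{[b,c]}, c]; (iii) for all a,b,c ∈ Ω, [b,c] = [a,b]·[b,c]·[a^{[b,c]}, c]. Moreover, if these conditions hold, then for any ∞ ∈ Ω the Conway groupoid L_∞(D) is a subgroup of Sym(Ω), and every element of L_∞(D) maps lines of D to lines of D (i.e., L_∞(D) is a group of automorphisms of D). -/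
open Equiv

variable {Ω : Type*}

/-!
Because every line has four points, each move `[a,b]` is an involution and `[a,b] = [b,a]`.
Then (ii) and (iii) are the same identity rearranged, (i) specialises to (ii) because `[b,c]`
sends `b` to `c`, and (ii) gives back (i) by writing `[a,b]` as the `[b,c]`-conjugate of
`[a^{[b,c]}, c]`, conjugating factorwise by `[c,d]` and applying (ii) once more at the vertex
`d`. Under (i) every move sequence `g` transports moves, `g [a,b] g⁻¹ = [a^g, b^g]`. So
`g h = (g h g⁻¹) g` exhibits a product of two sequences from `∞` as a sequence from `∞`, making
the finite set `L_∞(D)` a group; and `g` maps a line `{p, q, r, [p,q] r}` to a line, since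
`[p^g, q^g]` moves `r^g` to `([p,q] r)^g ≠ r^g`.
-/

open Pointwise

lemma Finset.exists_eq_insert_of_card_eq_four [DecidableEq Ω] {L : Finset Ω} (hL : L.card = 4)
    {a b x : Ω} (ha : a ∈ L) (hb : b ∈ L) (hx : x ∈ L) (hab : a ≠ b) (hxa : x ≠ a) (hxb : x ≠ b) :
    ∃ y, L = {a, b, x, y} := by
  have hsub : ({a, b, x} : Finset Ω) ⊆ L := by simp [Finset.insert_subset_iff, *]
  have hcard : ({a, b, x} : Finset Ω).card + 1 = L.card := by
    rw [hL, Finset.card_insert_of_notMem (by simp [hab, hxa.symm]), Finset.card_pair hxb.symm]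
  obtain ⟨y, -, rfl⟩ := Finset.exists_eq_insert_iff.2 ⟨hsub, hcard⟩
  exact ⟨y, by ext; simp only [Finset.mem_insert, Finset.mem_singleton]; tauto⟩

/-- Conditions (i) and (ii); with permutations acting on the left, the paper's
`[c,d]⁻¹ [a,b] [c,d]` is `mv c d * mv a b * (mv c d)⁻¹`. -/
def ConjCompatible (mv : Ω → Ω → Perm Ω) : Prop :=
  ∀ a b c d : Ω, mv c d * mv a b * (mv c d)⁻¹ = mv (mv c d a) (mv c d b)

def AdjConjCompatible (mv : Ω → Ω → Perm Ω) : Prop :=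
  ∀ a b c : Ω, mv b c * mv a b * (mv b c)⁻¹ = mv (mv b c a) c

def moveEquivariant (mv : Ω → Ω → Perm Ω) : Submonoid (Perm Ω) where
  carrier := {g | ∀ a b, g * mv a b * g⁻¹ = mv (g a) (g b)}
  mul_mem' {g h} hg hh a b := by
    rw [show g * h * mv a b * (g * h)⁻¹ = g * (h * mv a b * h⁻¹) * g⁻¹ by group, hh, hg]
    rfl
  one_mem' a b := by simp

lemma ConjCompatible.mem_moveEquivariant {mv : Ω → Ω → Perm Ω} (h : ConjCompatible mv)
    (c d : Ω) : mv c d ∈ moveEquivariant mv :=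
  fun a b => h a b c d

section ElementaryMoves

variable [DecidableEq Ω] {B : Set (Finset Ω)} {mv : Ω → Ω → Perm Ω}

lemma IsElemMoveFn.apply_left_s7 (hmv : IsElemMoveFn B mv) (a b : Ω) : mv a b a = b := by
  rcases eq_or_ne a b with rfl | hab
  · simp [hmv.1]
  · exact (hmv.2 a b hab).1

lemma IsElemMoveFn.line_or_apply_eq_self (hmv : IsElemMoveFn B mv) (hB4 : ∀ L ∈ B, L.card = 4)
    {a b x : Ω} (hab : a ≠ b) (hxa : x ≠ a) (hxb : x ≠ b) :
    ({a, b, x, mv a b x} : Finset Ω) ∈ B ∨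
      (∀ L ∈ B, ¬(a ∈ L ∧ b ∈ L ∧ x ∈ L)) ∧ mv a b x = x := by
  by_cases hcol : ∃ L ∈ B, a ∈ L ∧ b ∈ L ∧ x ∈ L
  · obtain ⟨L, hL, ha, hb, hx⟩ := hcol
    obtain ⟨y, rfl⟩ := Finset.exists_eq_insert_of_card_eq_four (hB4 L hL) ha hb hx hab hxa hxb
    left
    rwa [(hmv.2 a b hab).2.2.1 x y hL]
  · have hnot : ∀ L ∈ B, ¬(a ∈ L ∧ b ∈ L ∧ x ∈ L) := fun L hL h => hcol ⟨L, hL, h⟩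
    exact .inr ⟨hnot, (hmv.2 a b hab).2.2.2 x hxa hxb hnot⟩

lemma IsElemMoveFn.involutive (hmv : IsElemMoveFn B mv) (hB4 : ∀ L ∈ B, L.card = 4)
    (a b : Ω) : Function.Involutive (mv a b) := by
  rcases eq_or_ne a b with rfl | hab
  · simp [hmv.1, Function.Involutive]
  obtain ⟨hla, hlb, hline, -⟩ := hmv.2 a b hab
  intro x
  rcases eq_or_ne x a with rfl | hxa
  · rw [hla, hlb]
  rcases eq_or_ne x b with rfl | hxb
  · rw [hlb, hla]
  rcases hmv.line_or_apply_eq_self hB4 hab hxa hxb with hL | ⟨-, hfix⟩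
  · exact hline _ _ (by rwa [Finset.pair_comm])
  · rw [hfix, hfix]

lemma IsElemMoveFn.inv (hmv : IsElemMoveFn B mv) (hB4 : ∀ L ∈ B, L.card = 4) (a b : Ω) :
    (mv a b)⁻¹ = mv a b :=
  inv_eq_of_mul_eq_one_right <| Perm.ext (hmv.involutive hB4 a b)

lemma IsElemMoveFn.comm (hmv : IsElemMoveFn B mv) (hB4 : ∀ L ∈ B, L.card = 4) (a b : Ω) :
    mv a b = mv b a := by
  rcases eq_or_ne a b with rfl | hab
  · rfl
  obtain ⟨hla, hlb, -, -⟩ := hmv.2 a b hab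
  obtain ⟨hlb', hla', hline', hfix'⟩ := hmv.2 b a hab.symm
  ext x
  rcases eq_or_ne x a with rfl | hxa
  · rw [hla, hla']
  rcases eq_or_ne x b with rfl | hxb
  · rw [hlb, hlb']
  rcases hmv.line_or_apply_eq_self hB4 hab hxa hxb with hL | ⟨hnot, hfix⟩
  · exact (hline' _ _ (by rwa [Finset.insert_comm])).symm
  · rw [hfix, hfix' x hxb hxa fun L hL h => hnot L hL ⟨h.2.1, h.1, h.2.2⟩]

lemma adjConjCompatible_iff (hmv : IsElemMoveFn B mv) (hB4 : ∀ L ∈ B, L.card = 4) :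
    AdjConjCompatible mv ↔ ∀ a b c : Ω, mv b c = mv (mv b c a) c * mv b c * mv a b := by
  refine forall₃_congr fun a b c => ?_
  conv_rhs => rw [eq_comm, ← eq_mul_inv_iff_mul_eq, ← eq_mul_inv_iff_mul_eq, hmv.inv hB4 a b]
  exact eq_comm

lemma conjCompatible_iff (hmv : IsElemMoveFn B mv) (hB4 : ∀ L ∈ B, L.card = 4) :
    ConjCompatible mv ↔ AdjConjCompatible mv := by
  refine ⟨fun h a b c => by rw [h a b b c, hmv.apply_left_s7], fun h a b c d => ?_⟩
  have hab : mv a b = (mv b c)⁻¹ * mv (mv b c a) c * mv b c := by rw [← h a b c]; group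
  have hga : mv d (mv c d b) (mv c d (mv b c a)) = mv c d a := by
    rw [hmv.comm hB4 d, ← h b c d]
    simp only [Perm.mul_apply, Perm.inv_def, symm_apply_apply, hmv.involutive hB4 b c a]
  calc mv c d * mv a b * (mv c d)⁻¹
      = (mv c d * mv b c * (mv c d)⁻¹)⁻¹ * (mv c d * mv (mv b c a) c * (mv c d)⁻¹) *
          (mv c d * mv b c * (mv c d)⁻¹) := by rw [hab]; group
    _ = mv (mv c d b) d * mv (mv c d (mv b c a)) d * mv (mv c d b) d := by
      rw [h b c d, h (mv b c a) c d, hmv.inv hB4]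
    _ = mv (mv c d a) (mv c d b) := by rw [← hga, ← h _ d, hmv.inv hB4, hmv.comm hB4 d]

end ElementaryMoves

section MoveSequences

variable {mv : Ω → Ω → Perm Ω}

lemma moveSeq_mem {S : Submonoid (Perm Ω)} (hS : ∀ a b, mv a b ∈ S) (x : Ω) (l : List Ω) :
    moveSeq mv x l ∈ S := by
  induction l generalizing x with
  | nil => exact S.one_mem
  | cons b l ih => exact S.mul_mem (ih b) (hS x b)

lemma moveSeq_conj {g : Perm Ω} (hg : g ∈ moveEquivariant mv) (x : Ω) (l : List Ω) :
    g * moveSeq mv x l * g⁻¹ = moveSeq mv (g x) (l.map g) := by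
  induction l generalizing x with
  | nil => simp [moveSeq]
  | cons b l ih =>
    calc g * (moveSeq mv b l * mv x b) * g⁻¹
        = (g * moveSeq mv b l * g⁻¹) * (g * mv x b * g⁻¹) := by group
      _ = moveSeq mv (g x) ((b :: l).map g) := by rw [ih, hg]; rfl

lemma moveSeq_append (x : Ω) (l l' : List Ω) :
    moveSeq mv x (l ++ l') = moveSeq mv (l.getLastD x) l' * moveSeq mv x l := by
  induction l generalizing x with
  | nil => simp [moveSeq]
  | cons b l ih => rw [List.cons_append, moveSeq, moveSeq, ih, List.getLastD_cons, mul_assoc]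

variable [DecidableEq Ω] {B : Set (Finset Ω)}

lemma IsElemMoveFn.moveSeq_apply_self (hmv : IsElemMoveFn B mv) (x : Ω) (l : List Ω) :
    moveSeq mv x l x = l.getLastD x := by
  induction l generalizing x with
  | nil => rfl
  | cons b l ih => rw [moveSeq, Perm.mul_apply, hmv.apply_left_s7, ih, List.getLastD_cons]

lemma IsElemMoveFn.conwayGroupoid_mul_self (hmv : IsElemMoveFn B mv) (h : ConjCompatible mv)
    (x : Ω) : ConwayGroupoid mv x * ConwayGroupoid mv x = ConwayGroupoid mv x := by
  refine subset_antisymm (Set.mul_subset_iff.2 ?_) (Set.subset_mul_left _ ⟨[], rfl⟩)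
  rintro _ ⟨l, rfl⟩ _ ⟨l', rfl⟩
  refine ⟨l ++ l'.map (moveSeq mv x l), ?_⟩
  rw [moveSeq_append, ← hmv.moveSeq_apply_self,
    ← moveSeq_conj (moveSeq_mem h.mem_moveEquivariant x l)]
  group

lemma IsElemMoveFn.image_mem_of_mem_moveEquivariant (hmv : IsElemMoveFn B mv)
    (hB4 : ∀ L ∈ B, L.card = 4) {g : Perm Ω} (hg : g ∈ moveEquivariant mv) {L : Finset Ω}
    (hL : L ∈ B) : L.image g ∈ B := by
  obtain ⟨p, hp, q, hq, r, hr, hpq, hpr, hqr⟩ := Finset.two_lt_card.1 (by rw [hB4 L hL]; norm_num)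
  have hLeq : L = {p, q, r, mv p q r} := by
    obtain ⟨s, rfl⟩ := Finset.exists_eq_insert_of_card_eq_four (hB4 L hL) hp hq hr hpq
      hpr.symm hqr.symm
    rw [(hmv.2 p q hpq).2.2.1 r s hL]
  have hsr : mv p q r ≠ r := by
    intro hs
    have := hB4 L hL
    rw [hLeq, hs, Finset.pair_eq_singleton] at this
    have := Finset.card_le_three (a := p) (b := q) (c := r)
    omega
  have hgs : g (mv p q r) = mv (g p) (g q) (g r) := by
    rw [← hg p q]
    simp [Perm.mul_apply, Perm.inv_def]
  rcases hmv.line_or_apply_eq_self hB4 (g.injective.ne hpq) (g.injective.ne hpr.symm)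
    (g.injective.ne hqr.symm) with hL' | ⟨-, hfix⟩
  · rw [hLeq]
    simpa [Finset.image_insert, hgs] using hL'
  · exact absurd (g.injective (hgs.trans hfix)) hsr

end MoveSequences

theorem elemMove_conj_tfae_general [Fintype Ω] [DecidableEq Ω]
    {B : Set (Finset Ω)} {n lam : ℕ}
    (hD : IsDesign B n lam)
    (mv : Ω → Ω → Equiv.Perm Ω) (hmv : IsElemMoveFn B mv) :
    ((∀ a b c d : Ω, mv c d * mv a b * (mv c d)⁻¹ = mv (mv c d a) (mv c d b)) ↔
     (∀ a b c : Ω, mv b c * mv a b * (mv b c)⁻¹ = mv (mv b c a) c)) ∧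
    ((∀ a b c : Ω, mv b c * mv a b * (mv b c)⁻¹ = mv (mv b c a) c) ↔
     (∀ a b c : Ω, mv b c = mv (mv b c a) c * mv b c * mv a b)) ∧
    ((∀ a b c d : Ω, mv c d * mv a b * (mv c d)⁻¹ = mv (mv c d a) (mv c d b)) →
      ∀ inf : Ω,
        (∃ H : Subgroup (Equiv.Perm Ω),
          (H : Set (Equiv.Perm Ω)) = ConwayGroupoid mv inf) ∧
        ∀ g ∈ ConwayGroupoid mv inf, ∀ L ∈ B, L.image (⇑g) ∈ B) := by
  have hB4 : ∀ L ∈ B, L.card = 4 := hD.2.1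
  refine ⟨conjCompatible_iff hmv hB4, adjConjCompatible_iff hmv hB4, fun h inf => ⟨?_, ?_⟩⟩
  · exact ⟨subgroupOfIdempotent (ConwayGroupoid mv inf) ⟨1, [], rfl⟩
      (hmv.conwayGroupoid_mul_self h inf), rfl⟩
  · rintro g ⟨l, rfl⟩ L hL
    exact hmv.image_mem_of_mem_moveEquivariant hB4
      (moveSeq_mem (ConjCompatible.mem_moveEquivariant h) inf l) hL

/-- Lemma 2.8: for a supersimple `2-(n,4,λ)` design the following are
equivalent (writing `x^g` for the image of `x` under `g`, so the conjugate of `[a,b]`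
by `g` is the permutation sending `x^g ↦ ...`):
(i) the conjugate of `[a,b]` by `[c,d]` is `[a^{[c,d]}, b^{[c,d]}]` for all `a,b,c,d`;
(ii) the conjugate of `[a,b]` by `[b,c]` is `[a^{[b,c]}, c]` for all `a,b,c`;
(iii) `[b,c] = [a,b]·[b,c]·[a^{[b,c]},c]` for all `a,b,c` (factors applied left to
right). If these hold, then for any `∞` the Conway groupoid `L_∞(D)` is a subgroup of
`Sym(Ω)` all of whose elements map lines to lines. -/
theorem elemMove_conj_tfae [Fintype Ω] [DecidableEq Ω]
    {B : Set (Finset Ω)} {n lam : ℕ}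
    (hD : IsDesign B n lam) (hss : Supersimple B)
    (mv : Ω → Ω → Equiv.Perm Ω) (hmv : IsElemMoveFn B mv) :
    ((∀ a b c d : Ω, mv c d * mv a b * (mv c d)⁻¹ = mv (mv c d a) (mv c d b)) ↔
     (∀ a b c : Ω, mv b c * mv a b * (mv b c)⁻¹ = mv (mv b c a) c)) ∧
    ((∀ a b c : Ω, mv b c * mv a b * (mv b c)⁻¹ = mv (mv b c a) c) ↔
     (∀ a b c : Ω, mv b c = mv (mv b c a) c * mv b c * mv a b)) ∧
    ((∀ a b c d : Ω, mv c d * mv a b * (mv c d)⁻¹ = mv (mv c d a) (mv c d b)) →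
      ∀ inf : Ω,
        (∃ H : Subgroup (Equiv.Perm Ω),
          (H : Set (Equiv.Perm Ω)) = ConwayGroupoid mv inf) ∧
        ∀ g ∈ ConwayGroupoid mv inf, ∀ L ∈ B, L.image (⇑g) ∈ B) :=
  elemMove_conj_tfae_general hD mv hmv
end

section
/- Let m ≥ 2, V = F_2^{2m}, and θ as defined. Then each of the designs D^a and D^ε (for ε ∈ F_2) satisfies (△), and for each of these designs the set of its collinear triples forms a regular two-graph on its point set. -/
open Equiv

variable {Ω : Type*}

/-!
Both designs consist of the 4-sets on which a map `f` into an `𝔽₂`-vector space sums to zero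
(`v ↦ (v, θ v)` for `D^a`, the inclusion for `D^ε`). In characteristic 2 the sums over `L₁` and
`L₂` add up to the sum over `L₁ ∆ L₂`, which gives (△). A 3-set is collinear iff its `f`-sum is
again a value of `f`; by the polarization identity
`θ (x + y + z) = θ x + θ y + θ z + β x y + β x z + β y z` this means, in both designs,
`β x y + β x z + β y z = 0`, where `β` is the symplectic polar form of `θ`. Triples cut out this
way by any `β` form a two-graph, since the four triangle sums inside a 4-set add up to `0`.
For regularity, the triples through `{a, b}` correspond to the points `c ∉ {a, b}` of the affine
hyperplane `β (a + b) c = β a b`, which has `|V| / 2` points. In `D^ε` it is cut with the quadric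
`θ = ε`: translation by `a + b` swaps the two quadrics on the complementary hyperplane, which
therefore meets each of them in `|V| / 4` points.
-/

open Finset Function
open scoped symmDiff

section ZModTwo

variable {α M : Type*} [AddCommGroup M] [Module (ZMod 2) M]

theorem add_self_eq_zero_of_zmodTwo (x : M) : x + x = 0 := by
  rw [← two_nsmul]; exact ZModModule.char_nsmul_eq_zero 2 x

theorem eq_of_add_eq_zero_of_zmodTwo {x y : M} (h : x + y = 0) : x = y := by
  rw [← add_left_inj y, h, add_self_eq_zero_of_zmodTwo]

theorem sum_symmDiff_of_zmodTwo [DecidableEq α] (s t : Finset α) (f : α → M) :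
    ∑ x ∈ s ∆ t, f x = ∑ x ∈ s, f x + ∑ x ∈ t, f x := by
  rw [Finset.symmDiff_def, sum_union disjoint_sdiff_sdiff, ← sum_inter_add_sum_sdiff s t,
    ← sum_inter_add_sum_sdiff t s, inter_comm t s]
  have := add_self_eq_zero_of_zmodTwo (∑ x ∈ s ∩ t, f x)
  linear_combination (norm := abel_nf) -this

theorem zmod_two_ne_iff_eq_add_one (x y : ZMod 2) : x ≠ y ↔ x = y + 1 := by
  revert x y; decide

theorem two_mul_card_fiber_of_surjective {G : Type*} [AddGroup G] [Fintype G]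
    {φ : G →+ ZMod 2} (hφ : Surjective φ) (δ : ZMod 2) :
    2 * #{x | φ x = δ} = Fintype.card G := by
  rw [two_mul]
  nth_rw 2 [AddMonoidHom.card_fiber_eq_of_mem_range φ (hφ δ) (hφ (δ + 1))]
  rw [← filter_congr fun x _ => zmod_two_ne_iff_eq_add_one _ _, card_filter_add_card_filter_not,
    card_univ]

end ZModTwo

theorem card_filter_subtype_val {α : Type*} [Fintype α] (p q : α → Prop) [DecidablePred p]
    [DecidablePred q] : #{x : Subtype p | q x} = #{x | p x ∧ q x} := by
  rw [← Fintype.card_subtype, Fintype.card_congr (Equiv.subtypeSubtypeEquivSubtypeInter p q),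
    Fintype.card_subtype]

section ZeroSumQuadruples

variable {M : Type*} [AddCommGroup M] [Module (ZMod 2) M]

def zeroSumQuadruples (f : Ω → M) : Set (Finset Ω) :=
  {L | L.card = 4 ∧ ∑ x ∈ L, f x = 0}

theorem symmDiffCond_zeroSumQuadruples [DecidableEq Ω] (f : Ω → M) :
    SymmDiffCond (zeroSumQuadruples f) := by
  rintro L₁ ⟨hcard₁, hsum₁⟩ L₂ ⟨hcard₂, hsum₂⟩ hinter
  refine ⟨?_, by rw [sum_symmDiff_of_zmodTwo, hsum₁, hsum₂, add_zero]⟩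
  rw [Finset.symmDiff_def, card_union_of_disjoint disjoint_sdiff_sdiff, card_sdiff, card_sdiff,
    inter_comm, hinter, hcard₁, hcard₂]

theorem mem_collinearTriples_zeroSumQuadruples [DecidableEq Ω] {f : Ω → M} (hf : Injective f)
    {t : Finset Ω} :
    t ∈ collinearTriples (zeroSumQuadruples f) ↔ t.card = 3 ∧ ∑ x ∈ t, f x ∈ Set.range f := by
  constructor
  · rintro ⟨ht, L, ⟨hL, hsum⟩, htL⟩
    obtain ⟨d, hd⟩ : ∃ d, L \ t = {d} := card_eq_one.mp (by rw [card_sdiff_of_subset htL, hL, ht])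
    rw [← sum_sdiff htL, hd, sum_singleton] at hsum
    exact ⟨ht, d, eq_of_add_eq_zero_of_zmodTwo hsum⟩
  · rintro ⟨ht, d, hd⟩
    have hdt : d ∉ t := by
      intro hdt
      obtain ⟨y, z, hyz, hyz'⟩ := card_eq_two.mp (by rw [card_erase_of_mem hdt, ht])
      rw [← add_sum_erase t f hdt, hyz', sum_pair hyz, left_eq_add] at hd
      exact hyz (hf (eq_of_add_eq_zero_of_zmodTwo hd))
    refine ⟨ht, insert d t, ⟨by rw [card_insert_of_notMem hdt, ht], ?_⟩, subset_insert d t⟩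
    rw [sum_insert hdt, ← hd, add_self_eq_zero_of_zmodTwo]

end ZeroSumQuadruples

section TwoGraph

variable [DecidableEq Ω] {C : Set (Finset Ω)}

theorem ncard_filter_pair_subset_eq_card [Fintype Ω] [DecidablePred (· ∈ C)]
    (hC₃ : ∀ t ∈ C, t.card = 3) {a b : Ω} (hab : a ≠ b) :
    {t ∈ C | {a, b} ⊆ t}.ncard = #{c | c ≠ a ∧ c ≠ b ∧ {c, a, b} ∈ C} := by
  have hpair : ∀ c, c ∉ ({a, b} : Finset Ω) ↔ c ≠ a ∧ c ≠ b := by simp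
  have hset : {t ∈ C | {a, b} ⊆ t} =
      (insert · {a, b}) '' ↑({c | c ≠ a ∧ c ≠ b ∧ {c, a, b} ∈ C} : Finset Ω) := by
    ext t
    simp only [Set.mem_ofPred_eq, coe_filter, mem_univ, true_and, Set.mem_image]
    constructor
    · rintro ⟨htC, hsub⟩
      obtain ⟨c, hc, rfl⟩ := exists_eq_insert_iff.mpr ⟨hsub, by rw [hC₃ t htC, card_pair hab]⟩
      obtain ⟨hca, hcb⟩ := (hpair c).mp hc
      exact ⟨c, ⟨hca, hcb, htC⟩, rfl⟩
    · rintro ⟨c, ⟨-, -, hc⟩, rfl⟩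
      exact ⟨hc, subset_insert _ _⟩
  rw [hset, Set.InjOn.ncard_image, Set.ncard_coe_finset]
  rintro c hc c' - hcc'
  simp only [coe_filter, mem_univ, true_and, Set.mem_ofPred_eq] at hc
  exact (insert_inj ((hpair c).mpr ⟨hc.1, hc.2.1⟩)).mp hcc'

theorem ncard_filter_subset_eq_card_filter_erase [DecidablePred (· ∈ C)] {q : Finset Ω}
    (hC : ∀ t ∈ C, t.card + 1 = q.card) :
    {t ∈ C | t ⊆ q}.ncard = #{x ∈ q | q.erase x ∈ C} := by
  have hset : {t ∈ C | t ⊆ q} = q.erase '' ↑({x ∈ q | q.erase x ∈ C}) := by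
    ext t
    simp only [Set.mem_ofPred_eq, coe_filter, Set.mem_image]
    constructor
    · rintro ⟨htC, hsub⟩
      obtain ⟨x, hx, rfl⟩ := exists_eq_insert_iff.mpr ⟨hsub, hC t htC⟩
      exact ⟨x, ⟨mem_insert_self x t, by rwa [erase_insert hx]⟩, erase_insert hx⟩
    · rintro ⟨x, ⟨-, hx⟩, rfl⟩
      exact ⟨hx, erase_subset x q⟩
  rw [hset, Set.InjOn.ncard_image (q.erase_injOn.mono (coe_subset.mpr (filter_subset _ q))),
    Set.ncard_coe_finset]

theorem ncard_filter_subset_eq_zero_or_two_or_four (g : Ω → Ω → ZMod 2) (hC₃ : ∀ t ∈ C, t.card = 3)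
    (hC : ∀ x y z, x ≠ y → x ≠ z → y ≠ z → ({x, y, z} ∈ C ↔ g x y + g x z + g y z = 0))
    {q : Finset Ω} (hq : q.card = 4) :
    {t ∈ C | t ⊆ q}.ncard = 0 ∨ {t ∈ C | t ⊆ q}.ncard = 2 ∨ {t ∈ C | t ⊆ q}.ncard = 4 := by
  classical
  rw [ncard_filter_subset_eq_card_filter_erase (by simp +contextual [hC₃, hq])]
  obtain ⟨a, r, har, rfl, hr⟩ := card_eq_succ.mp hq
  obtain ⟨b, c, d, hbc, hbd, hcd, rfl⟩ := card_eq_three.mp hr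
  simp only [mem_insert, mem_singleton, not_or] at har
  obtain ⟨hab, hac, had⟩ := har
  obtain ⟨hea, heb, hec, hed⟩ : ({a, b, c, d} : Finset Ω).erase a = {b, c, d} ∧
      ({a, b, c, d} : Finset Ω).erase b = {a, c, d} ∧
      ({a, b, c, d} : Finset Ω).erase c = {a, b, d} ∧
      ({a, b, c, d} : Finset Ω).erase d = {a, b, c} := by
    simp [erase_insert_of_ne, erase_eq_of_notMem, hab, hac, had, hbc, hbd, hcd]
  rw [card_filter, sum_insert (by simp [hab, hac, had]), sum_insert (by simp [hbc, hbd]),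
    sum_insert (by simp [hcd]), sum_singleton, hea, heb, hec, hed]
  simp only [hC b c d hbc hbd hcd, hC a c d hac had hcd, hC a b d hab had hbd, hC a b c hab hac hbc]
  -- The four triangle sums add up to twice the sum over the six edges, so an even number vanish.
  generalize g a b = x₁, g a c = x₂, g a d = x₃, g b c = x₄, g b d = x₅, g c d = x₆
  revert x₁ x₂ x₃ x₄ x₅ x₆
  decide

theorem isRegularTwoGraph_of_triangle_sum [Fintype Ω] (g : Ω → Ω → ZMod 2)
    (hC₃ : ∀ t ∈ C, t.card = 3)
    (hC : ∀ x y z, x ≠ y → x ≠ z → y ≠ z → ({x, y, z} ∈ C ↔ g x y + g x z + g y z = 0))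
    (μ : ℕ) (hμ : ∀ a b, a ≠ b → #{c | c ≠ a ∧ c ≠ b ∧ g c a + g c b + g a b = 0} = μ) :
    IsRegularTwoGraph C := by
  classical
  refine ⟨hC₃, ⟨μ, fun p hp => ?_⟩,
    fun q hq => ncard_filter_subset_eq_zero_or_two_or_four g hC₃ hC hq⟩
  obtain ⟨a, b, hab, rfl⟩ := card_eq_two.mp hp
  rw [ncard_filter_pair_subset_eq_card hC₃ hab, ← hμ a b hab]
  refine congrArg card (filter_congr fun c _ => ?_)
  exact and_congr_right fun hca => and_congr_right fun hcb => hC c a b hca hcb hab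

end TwoGraph

section Symplectic

variable {m : ℕ}

/-- `thetaPolar u v = u (e + eᵀ) vᵀ`, the polar form of `θ`. -/
def thetaPolar (u v : Vsp m) : ZMod 2 :=
  ∑ k, u k * v k.swap

theorem theta_add (u v : Vsp m) : theta (u + v) = theta u + theta v + thetaPolar u v := by
  simp only [theta, thetaPolar, Fintype.sum_sum_type, Sum.swap_inl, Sum.swap_inr, Pi.add_apply,
    ← sum_add_distrib]
  exact sum_congr rfl fun i _ => by ring

theorem thetaPolar_comm (u v : Vsp m) : thetaPolar u v = thetaPolar v u := by
  simp only [thetaPolar, Fintype.sum_sum_type, Sum.swap_inl, Sum.swap_inr]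
  rw [add_comm]
  exact congrArg₂ _ (sum_congr rfl fun i _ => mul_comm _ _) (sum_congr rfl fun i _ => mul_comm _ _)

theorem thetaPolar_add_right (u v w : Vsp m) :
    thetaPolar u (v + w) = thetaPolar u v + thetaPolar u w := by
  simp only [thetaPolar, Pi.add_apply, mul_add, sum_add_distrib]

theorem thetaPolar_add_left (u v w : Vsp m) :
    thetaPolar (u + v) w = thetaPolar u w + thetaPolar v w := by
  rw [thetaPolar_comm, thetaPolar_add_right, thetaPolar_comm w, thetaPolar_comm w]

theorem thetaPolar_self (u : Vsp m) : thetaPolar u u = 0 := by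
  have h := theta_add u u
  rwa [add_self_eq_zero_of_zmodTwo u, CharTwo.add_self_eq_zero (theta u), zero_add, eq_comm,
    show theta (0 : Vsp m) = 0 by simp [theta]] at h

theorem thetaPolar_single_swap (u : Vsp m) (j : Fin m ⊕ Fin m) :
    thetaPolar u (Pi.single j.swap 1) = u j := by
  simp only [thetaPolar, Pi.single_apply, Sum.swap_leftInverse.injective.eq_iff, mul_ite, mul_one,
    mul_zero, sum_ite_eq', mem_univ, if_true]

theorem surjective_thetaPolar {w : Vsp m} (hw : w ≠ 0) : Surjective (thetaPolar w) := by
  obtain ⟨j, hj⟩ : ∃ j, w j ≠ 0 := Function.ne_iff.mp hw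
  have hj1 : w j = 1 := by revert hj; generalize w j = x; revert x; decide
  intro δ
  rcases (by decide : ∀ δ : ZMod 2, δ = 0 ∨ δ = 1) δ with rfl | rfl
  · exact ⟨0, by simp [thetaPolar]⟩
  · exact ⟨Pi.single j.swap 1, by rw [thetaPolar_single_swap, hj1]⟩

theorem theta_add_add (a b c : Vsp m) :
    theta (a + b + c) = theta a + theta b + theta c +
      (thetaPolar a b + thetaPolar a c + thetaPolar b c) := by
  rw [theta_add, theta_add, thetaPolar_add_left]
  ring

end Symplectic

section Counting

variable {m : ℕ}

theorem two_mul_card_thetaPolar_eq {w : Vsp m} (hw : w ≠ 0) (δ : ZMod 2) :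
    2 * #{c | thetaPolar w c = δ} = Fintype.card (Vsp m) :=
  two_mul_card_fiber_of_surjective (φ := AddMonoidHom.mk' (thetaPolar w) (thetaPolar_add_right w))
    (surjective_thetaPolar hw) δ

theorem four_mul_card_theta_eq_thetaPolar_ne {w : Vsp m} (hw : w ≠ 0) (ε : ZMod 2) :
    4 * #{c | thetaPolar w c ≠ theta w ∧ theta c = ε} = Fintype.card (Vsp m) := by
  -- On `{c | thetaPolar w c ≠ theta w}` translation by `w` preserves `thetaPolar w` and flips `θ`.
  have hflip : #{c | thetaPolar w c ≠ theta w ∧ theta c = ε} =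
      #{c | thetaPolar w c ≠ theta w ∧ ¬theta c = ε} := by
    refine card_equiv (Equiv.addRight w) fun c => ?_
    simp only [mem_filter, mem_univ, true_and, Equiv.coe_addRight, thetaPolar_add_right,
      thetaPolar_self, add_zero, theta_add, thetaPolar_comm c w]
    generalize thetaPolar w c = x, theta w = y, theta c = z
    revert x y z ε
    decide
  have hsplit := card_filter_add_card_filter_not (s := {c | thetaPolar w c ≠ theta w})
    (fun c => theta c = ε)
  rw [filter_filter, filter_filter, ← hflip] at hsplit
  have hhalf := two_mul_card_thetaPolar_eq hw (theta w + 1)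
  rw [filter_congr fun c _ => (zmod_two_ne_iff_eq_add_one _ _).symm] at hhalf
  omega

theorem card_zero_sum_triangles_thetaPolar {a b : Vsp m} (hab : a ≠ b) :
    #{c | c ≠ a ∧ c ≠ b ∧ thetaPolar c a + thetaPolar c b + thetaPolar a b = 0} =
      Fintype.card (Vsp m) / 2 - 2 := by
  have hfilter : ({c | c ≠ a ∧ c ≠ b ∧ thetaPolar c a + thetaPolar c b + thetaPolar a b = 0} :
      Finset (Vsp m)) =
      ({c | thetaPolar (a + b) c = thetaPolar a b} : Finset (Vsp m)) \ {a, b} := by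
    ext c
    simp only [mem_filter, mem_univ, true_and, mem_sdiff, mem_insert, mem_singleton,
      thetaPolar_add_left, thetaPolar_comm a c, thetaPolar_comm b c, CharTwo.add_eq_zero]
    tauto
  have hsub : {a, b} ⊆ ({c | thetaPolar (a + b) c = thetaPolar a b} : Finset (Vsp m)) := by
    simp [insert_subset_iff, thetaPolar_add_left, thetaPolar_self, thetaPolar_comm b a]
  have hhalf := two_mul_card_thetaPolar_eq (fun h => hab (eq_of_add_eq_zero_of_zmodTwo h))
    (thetaPolar a b)
  rw [hfilter, card_sdiff_of_subset hsub, card_pair hab]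
  omega

theorem card_zero_sum_triangles_thetaPolar_subtype {ε : ZMod 2}
    {a b : {v : Vsp m // theta v = ε}} (hab : a ≠ b) :
    #{c | c ≠ a ∧ c ≠ b ∧ thetaPolar c.1 a + thetaPolar c.1 b + thetaPolar a.1 b = 0} =
      Fintype.card {v : Vsp m // theta v = ε} - Fintype.card (Vsp m) / 4 - 2 := by
  set w := a.1 + b.1
  have hw : w ≠ 0 := fun h => hab (Subtype.ext (eq_of_add_eq_zero_of_zmodTwo h))
  have htheta : theta w = thetaPolar a.1 b := by
    rw [theta_add, a.2, b.2, CharTwo.add_self_eq_zero, zero_add]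
  have hfilter : ({c | c ≠ a ∧ c ≠ b ∧ thetaPolar c.1 a + thetaPolar c.1 b + thetaPolar a.1 b = 0} :
      Finset {v : Vsp m // theta v = ε}) =
      ({c | thetaPolar w c = theta w} : Finset {v : Vsp m // theta v = ε}) \ {a, b} := by
    ext c
    simp only [mem_filter, mem_univ, true_and, mem_sdiff, mem_insert, mem_singleton, w, htheta,
      thetaPolar_add_left, thetaPolar_comm a.1 c, thetaPolar_comm b.1 c, CharTwo.add_eq_zero]
    tauto
  have hsub : {a, b} ⊆ ({c | thetaPolar w c = theta w} : Finset {v : Vsp m // theta v = ε}) := by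
    simp [insert_subset_iff, w, htheta, thetaPolar_add_left, thetaPolar_self,
      thetaPolar_comm b.1 a.1]
  have hcompl := card_filter_add_card_filter_not (s := univ)
    (fun c : {v : Vsp m // theta v = ε} => thetaPolar w c = theta w)
  rw [card_filter_subtype_val (fun v => theta v = ε) (fun v => ¬thetaPolar w v = theta w),
    card_univ] at hcompl
  have hquarter := four_mul_card_theta_eq_thetaPolar_ne hw ε
  simp only [ne_eq, and_comm (a := ¬_)] at hquarter
  rw [hfilter, card_sdiff_of_subset hsub, card_pair hab]
  omega

end Counting

section Designs

variable {m : ℕ}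

theorem linesA_eq_zeroSumQuadruples :
    linesA m = zeroSumQuadruples fun v : Vsp m => (v, theta v) := by
  ext L
  simp only [linesA, zeroSumQuadruples, Set.mem_ofPred_eq, ← prod_mk_sum, Prod.mk_eq_zero]

theorem linesEps_eq_zeroSumQuadruples (ε : ZMod 2) :
    linesEps m ε = zeroSumQuadruples ((↑) : {v : Vsp m // theta v = ε} → Vsp m) :=
  rfl

theorem mem_collinearTriples_linesA {x y z : Vsp m} (hxy : x ≠ y) (hxz : x ≠ z) (hyz : y ≠ z) :
    {x, y, z} ∈ collinearTriples (linesA m) ↔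
      thetaPolar x y + thetaPolar x z + thetaPolar y z = 0 := by
  rw [linesA_eq_zeroSumQuadruples,
    mem_collinearTriples_zeroSumQuadruples fun u v h => congrArg Prod.fst h,
    sum_insert (by simp [hxy, hxz]), sum_pair hyz, ← add_assoc]
  simp only [card_eq_three.mpr ⟨x, y, z, hxy, hxz, hyz, rfl⟩, true_and, Set.mem_range,
    Prod.mk_add_mk, Prod.mk.injEq, exists_eq_left, theta_add_add, add_eq_left]

theorem mem_collinearTriples_linesEps {ε : ZMod 2} {x y z : {v : Vsp m // theta v = ε}}
    (hxy : x ≠ y) (hxz : x ≠ z) (hyz : y ≠ z) :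
    {x, y, z} ∈ collinearTriples (linesEps m ε) ↔
      thetaPolar x.1 y + thetaPolar x.1 z + thetaPolar y.1 z = 0 := by
  rw [linesEps_eq_zeroSumQuadruples, mem_collinearTriples_zeroSumQuadruples Subtype.val_injective,
    sum_insert (by simp [hxy, hxz]), sum_pair hyz, Subtype.range_coe_subtype, ← add_assoc]
  simp only [card_eq_three.mpr ⟨x, y, z, hxy, hxz, hyz, rfl⟩, true_and, Set.mem_ofPred_eq,
    theta_add_add, x.2, y.2, z.2, CharTwo.add_self_eq_zero, zero_add, add_eq_left]

theorem isRegularTwoGraph_collinearTriples_linesA :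
    IsRegularTwoGraph (collinearTriples (linesA m)) :=
  isRegularTwoGraph_of_triangle_sum thetaPolar (fun _ ht => ht.1)
    (fun _ _ _ => mem_collinearTriples_linesA) _ fun _ _ => card_zero_sum_triangles_thetaPolar

theorem isRegularTwoGraph_collinearTriples_linesEps (ε : ZMod 2) :
    IsRegularTwoGraph (collinearTriples (linesEps m ε)) :=
  isRegularTwoGraph_of_triangle_sum (fun x y => thetaPolar x.1 y) (fun _ ht => ht.1)
    (fun _ _ _ => mem_collinearTriples_linesEps) _
    fun _ _ => card_zero_sum_triangles_thetaPolar_subtype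

end Designs

theorem symplectic_designs_properties_general (m : ℕ) :
    SymmDiffCond (linesA m) ∧
    IsRegularTwoGraph (collinearTriples (linesA m)) ∧
    ∀ ε : ZMod 2,
      SymmDiffCond (linesEps m ε) ∧
      IsRegularTwoGraph (collinearTriples (linesEps m ε)) := by
  refine ⟨?_, isRegularTwoGraph_collinearTriples_linesA, fun ε => ⟨?_, ?_⟩⟩
  · rw [linesA_eq_zeroSumQuadruples]
    exact symmDiffCond_zeroSumQuadruples _
  · exact symmDiffCond_zeroSumQuadruples _
  · exact isRegularTwoGraph_collinearTriples_linesEps ε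

/-- Lemma 2.13: for `m ≥ 2`, the designs `D^a` and `D^ε` (`ε ∈ F_2`)
satisfy (△), and in each case the collinear triples form a regular two-graph on the
point set. -/
theorem symplectic_designs_properties (m : ℕ) (hm : 2 ≤ m) :
    SymmDiffCond (linesA m) ∧
    IsRegularTwoGraph (collinearTriples (linesA m)) ∧
    ∀ ε : ZMod 2,
      SymmDiffCond (linesEps m ε) ∧
      IsRegularTwoGraph (collinearTriples (linesEps m ε)) :=
  symplectic_designs_properties_general m
end
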